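/- In a complete structured DNNF, for any var-gate or ×-gate g and any assignment S ∈ S(g), the box of g (the set of gates mapped by the structuring function to the same v-tree node as g) is the unique least common ancestor in the v-tree of the boxes containing the var-gates whose variables occur in S. -/

import Mathlib

/-- Positions in binary trees (paths from the root; `false` = left, `true` = right). -/
abbrev BPos := List Bool

inductive GateType where
  | top | bot | var | times | cup
deriving DecidableEq

/-- A set circuit: a DAG of gates typed ⊤, ⊥, var, ×, ∪.  `wire g' g` means `g'` is an
input of `g`. -/
structure SetCircuit (V G : Type) where
  gtype : G → GateType
  wire : G → G → Prop
  varLabel : G → Set V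
  varLabel_inj : ∀ g g', gtype g = GateType.var → gtype g' = GateType.var →
      varLabel g = varLabel g' → g = g'
  source_no_input : ∀ g, (gtype g = GateType.top ∨ gtype g = GateType.bot ∨
      gtype g = GateType.var) → ∀ g', ¬ wire g' g
  const_no_output : ∀ g, (gtype g = GateType.top ∨ gtype g = GateType.bot) → ∀ g', ¬ wire g g'
  times_two : ∀ g, gtype g = GateType.times → ∃ g₁ g₂, g₁ ≠ g₂ ∧ wire g₁ g ∧ wire g₂ g ∧
      ∀ g', wire g' g → g' = g₁ ∨ g' = g₂
  cup_one : ∀ g, gtype g = GateType.cup → ∃ g', wire g' g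

/-- `Captures C g S` : the set `S` of variables belongs to the set `S(g)` captured by
gate `g`, following the inductive semantics of set circuits. -/
inductive Captures {V G : Type} (C : SetCircuit V G) : G → Set V → Prop
  | var {g} : C.gtype g = GateType.var → Captures C g (C.varLabel g)
  | top {g} : C.gtype g = GateType.top → Captures C g ∅
  | times {g g₁ g₂ S₁ S₂} : C.gtype g = GateType.times → C.wire g₁ g → C.wire g₂ g →
      g₁ ≠ g₂ → Captures C g₁ S₁ → Captures C g₂ S₂ → Captures C g (S₁ ∪ S₂)
  | cup {g g' S} : C.gtype g = GateType.cup → C.wire g' g → Captures C g' S → Captures C g S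

/-- `CupPath C g' g` : there is a wire-path from `g'` to `g` all of whose gates strictly
between `g'` and `g` are ∪-gates. -/
inductive CupPath {V G : Type} (C : SetCircuit V G) : G → G → Prop
  | single {g' g} : C.wire g' g → CupPath C g' g
  | cons {g' m g} : C.wire g' m → C.gtype m = GateType.cup → CupPath C m g → CupPath C g' g

/-- A v-tree: a binary tree whose leaves are labeled by sets of variables. -/
inductive VTree (V : Type) where
  | leaf (vars : Set V)
  | node (l r : VTree V)

/-- The subtree of a v-tree at a position (if any). -/
def VTree.sub {V : Type} : VTree V → BPos → Option (VTree V)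
  | t, [] => some t
  | VTree.leaf _, _ :: _ => none
  | VTree.node l r, b :: p => VTree.sub (if b then r else l) p

/-- Variables occurring in (the leaves of) a v-tree. -/
def VTree.vars {V : Type} : VTree V → Set V
  | VTree.leaf vs => vs
  | VTree.node l r => l.vars ∪ r.vars

/-- Variables occurring below a given position of a v-tree. -/
def VTree.varsAt {V : Type} (t : VTree V) (p : BPos) : Set V :=
  match t.sub p with
  | some s => s.vars
  | none => ∅

/-- A complete structured DNNF: a set circuit together with a v-tree and a structuring
function `σ` mapping each gate to a (valid) position of the v-tree (its box). -/
structure StructuredDNNF (V G : Type) extends SetCircuit V G where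
  vtree : VTree V
  σ : G → BPos
  σ_valid : ∀ g, (vtree.sub (σ g)).isSome
  var_leaf : ∀ g, gtype g = GateType.var →
      ∃ vs, vtree.sub (σ g) = some (VTree.leaf vs) ∧ varLabel g ⊆ vs
  var_nonempty : ∀ g, gtype g = GateType.var → (varLabel g).Nonempty
  wire_struct : ∀ g' g, wire g' g →
      σ g' = σ g ∨ (gtype g' = GateType.cup ∧ ∃ b, σ g' = σ g ++ [b])
  times_children : ∀ g, gtype g = GateType.times →
      (∃ g₁, wire g₁ g ∧ σ g₁ = σ g ++ [false]) ∧ (∃ g₂, wire g₂ g ∧ σ g₂ = σ g ++ [true])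
  leaves_disjoint : ∀ p₁ p₂ vs₁ vs₂, vtree.sub p₁ = some (VTree.leaf vs₁) →
      vtree.sub p₂ = some (VTree.leaf vs₂) → p₁ ≠ p₂ → Disjoint vs₁ vs₂

/-- `IsLCA S p` : `p` is the least common ancestor (w.r.t. the prefix/ancestor order on
positions) of the set `S` of positions. -/
def IsLCA (S : Set BPos) (p : BPos) : Prop :=
  (∀ b ∈ S, p <+: b) ∧ ∀ q : BPos, (∀ b ∈ S, q <+: b) → q <+: p

/-! The captured set of `g` consists of variables lying below the box of `g`, and the leaves
of the v-tree are disjoint, so every var-gate whose variables meet `S` sits below the box of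
`g`: that box is a common ancestor. It is the least one because a var-gate is its own box,
while the two inputs of a ×-gate sit in the left and the right child of its box and each
captures a nonempty set, hence contributes a var-gate in the corresponding subtree. -/

theorem List.prefix_of_prefix_append_of_ne {α : Type*} {p q x y : List α} {a b : α}
    (hab : a ≠ b) (hx : p ++ [a] <+: x) (hy : p ++ [b] <+: y) (hqx : q <+: x)
    (hqy : q <+: y) : q <+: p := by
  rcases le_or_gt q.length p.length with hlen | hlen
  · exact List.prefix_of_prefix_length_le hqx ((p.prefix_append [a]).trans hx) hlen
  · have hlen' (c : α) : (p ++ [c]).length ≤ q.length := by simpa using hlen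
    have ha := List.prefix_of_prefix_length_le hx hqx (hlen' a)
    have hb := List.prefix_of_prefix_length_le hy hqy (hlen' b)
    have hab' : p ++ [a] = p ++ [b] :=
      (List.prefix_of_prefix_length_le ha hb (by simp)).eq_of_length (by simp)
    simp [hab] at hab'

theorem IsLCA.unique {S : Set BPos} {p q : BPos} (hp : IsLCA S p) (hq : IsLCA S q) :
    p = q :=
  (hq.2 p hp.1).eq_of_length (le_antisymm (hq.2 p hp.1).length_le (hp.2 q hq.1).length_le)

namespace VTree

variable {V : Type}

theorem sub_append (t : VTree V) (p q : BPos) :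
    t.sub (p ++ q) = (t.sub p).bind (·.sub q) := by
  induction p generalizing t with
  | nil => rfl
  | cons b p ih =>
    cases t with
    | leaf vs => rfl
    | node l r => exact ih _

theorem vars_subset_of_sub_eq_some {t u : VTree V} {q : BPos} (h : t.sub q = some u) :
    u.vars ⊆ t.vars := by
  induction q generalizing t with
  | nil => cases h; rfl
  | cons b q ih =>
    cases t with
    | leaf vs => cases h
    | node l r =>
      refine (ih h).trans ?_
      cases b
      · exact Set.subset_union_left
      · exact Set.subset_union_right

theorem varsAt_append_subset (t : VTree V) (p q : BPos) : t.varsAt (p ++ q) ⊆ t.varsAt p := by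
  unfold varsAt
  rw [sub_append]
  cases t.sub p with
  | none => exact subset_rfl
  | some s =>
    simp only [Option.bind_some]
    cases h : s.sub q with
    | none => exact Set.empty_subset _
    | some u => exact vars_subset_of_sub_eq_some h

theorem exists_leaf_of_mem_vars {t : VTree V} {v : V} (h : v ∈ t.vars) :
    ∃ q vs, t.sub q = some (leaf vs) ∧ v ∈ vs := by
  induction t with
  | leaf vs => exact ⟨[], vs, rfl, h⟩
  | node l r ihl ihr =>
    rcases h with h | h
    · obtain ⟨q, vs, hq, hv⟩ := ihl h
      exact ⟨false :: q, vs, hq, hv⟩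
    · obtain ⟨q, vs, hq, hv⟩ := ihr h
      exact ⟨true :: q, vs, hq, hv⟩

theorem exists_leaf_of_mem_varsAt {t : VTree V} {p : BPos} {v : V} (h : v ∈ t.varsAt p) :
    ∃ q vs, t.sub (p ++ q) = some (leaf vs) ∧ v ∈ vs := by
  unfold varsAt at h
  cases hp : t.sub p with
  | none => simp [hp] at h
  | some s =>
    rw [hp] at h
    obtain ⟨q, vs, hq, hv⟩ := exists_leaf_of_mem_vars h
    exact ⟨q, vs, by rw [sub_append, hp]; exact hq, hv⟩

end VTree

theorem Captures.exists_var_mem {V G : Type} {C : SetCircuit V G} {g : G} {S : Set V}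
    (h : Captures C g S) {v : V} (hv : v ∈ S) :
    ∃ g', C.gtype g' = GateType.var ∧ v ∈ C.varLabel g' := by
  induction h with
  | @var g hvar => exact ⟨g, hvar, hv⟩
  | top _ => exact absurd hv (Set.notMem_empty v)
  | times _ _ _ _ _ _ ih₁ ih₂ => exact hv.elim ih₁ ih₂
  | cup _ _ _ ih => exact ih hv

theorem Captures.eq_varLabel {V G : Type} {C : SetCircuit V G} {g : G} {S : Set V}
    (h : Captures C g S) (hg : C.gtype g = GateType.var) : S = C.varLabel g := by
  cases h <;> simp_all

namespace StructuredDNNF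

variable {V G : Type} (D : StructuredDNNF V G)

def varBoxes (S : Set V) : Set BPos :=
  {p | ∃ g', D.gtype g' = GateType.var ∧ (D.varLabel g' ∩ S).Nonempty ∧ p = D.σ g'}

theorem varsAt_subset_of_wire {g' g : G} (hw : D.wire g' g) :
    D.vtree.varsAt (D.σ g') ⊆ D.vtree.varsAt (D.σ g) := by
  rcases D.wire_struct g' g hw with h | ⟨_, b, h⟩
  · rw [h]
  · rw [h]; exact VTree.varsAt_append_subset _ _ _

theorem captures_subset_varsAt {g : G} {S : Set V} (h : Captures D.toSetCircuit g S) :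
    S ⊆ D.vtree.varsAt (D.σ g) := by
  induction h with
  | @var g hv =>
    obtain ⟨vs, hsub, hlab⟩ := D.var_leaf g hv
    simpa [VTree.varsAt, VTree.vars, hsub] using hlab
  | top _ => exact Set.empty_subset _
  | times _ hw₁ hw₂ _ _ _ ih₁ ih₂ =>
    exact Set.union_subset (ih₁.trans (D.varsAt_subset_of_wire hw₁))
      (ih₂.trans (D.varsAt_subset_of_wire hw₂))
  | cup _ hw _ ih => exact ih.trans (D.varsAt_subset_of_wire hw)

theorem captures_nonempty {g : G} {S : Set V} (h : Captures D.toSetCircuit g S)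
    (hg : D.gtype g ≠ GateType.top) : S.Nonempty := by
  induction h with
  | @var g hv => exact D.var_nonempty g hv
  | top ht => exact absurd ht hg
  | @times _ g₁ _ _ _ _ hw₁ _ _ _ _ ih₁ _ =>
    exact (ih₁ fun h => D.const_no_output g₁ (Or.inl h) _ hw₁).mono Set.subset_union_left
  | @cup _ g' _ _ hw _ ih => exact ih fun h => D.const_no_output g' (Or.inl h) _ hw

theorem exists_var_inter_nonempty_of_wire {g g' : G} {S : Set V} (hw : D.wire g' g)
    (h : Captures D.toSetCircuit g' S) : ∃ g'', D.gtype g'' = GateType.var ∧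
      (D.varLabel g'' ∩ S).Nonempty := by
  obtain ⟨v, hv⟩ := D.captures_nonempty h fun ht => D.const_no_output g' (Or.inl ht) g hw
  obtain ⟨g'', hvar, hv'⟩ := h.exists_var_mem hv
  exact ⟨g'', hvar, v, hv', hv⟩

theorem box_prefix_of_captures {g g' : G} {S : Set V} (hS : Captures D.toSetCircuit g S)
    (hg' : D.gtype g' = GateType.var) (hne : (D.varLabel g' ∩ S).Nonempty) :
    D.σ g <+: D.σ g' := by
  obtain ⟨v, hv', hvS⟩ := hne
  obtain ⟨q, vs, hq, hv⟩ := VTree.exists_leaf_of_mem_varsAt (D.captures_subset_varsAt hS hvS)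
  obtain ⟨vs', hq', hlab⟩ := D.var_leaf g' hg'
  by_contra hpre
  have hne : D.σ g ++ q ≠ D.σ g' := fun h => hpre ⟨q, h⟩
  exact Set.disjoint_left.mp (D.leaves_disjoint _ _ _ _ hq hq' hne) hv (hlab hv')

theorem box_prefix_of_mem_varBoxes {g : G} {S : Set V} (hS : Captures D.toSetCircuit g S) :
    ∀ b ∈ D.varBoxes S, D.σ g <+: b := by
  rintro _ ⟨g', hg', hne, rfl⟩
  exact D.box_prefix_of_captures hS hg' hne

theorem exists_distinct_children_of_times_inputs {g g₁ g₂ : G} (hg : D.gtype g = GateType.times)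
    (hw₁ : D.wire g₁ g) (hw₂ : D.wire g₂ g) (hne : g₁ ≠ g₂) :
    ∃ b₁ b₂ : Bool, b₁ ≠ b₂ ∧ D.σ g₁ = D.σ g ++ [b₁] ∧ D.σ g₂ = D.σ g ++ [b₂] := by
  obtain ⟨c₁, c₂, -, -, -, hc⟩ := D.times_two g hg
  obtain ⟨⟨l, hwl, hl⟩, ⟨r, hwr, hr⟩⟩ := D.times_children g hg
  have hlr : l ≠ r := fun h => by simp [h, hr] at hl
  have hinput : ∀ g', D.wire g' g → g' = l ∨ g' = r := fun g' hw' => by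
    rcases hc l hwl with rfl | rfl <;> rcases hc r hwr with rfl | rfl <;>
      rcases hc g' hw' with rfl | rfl <;> simp_all
  rcases hinput g₁ hw₁ with rfl | rfl <;> rcases hinput g₂ hw₂ with rfl | rfl
  · exact absurd rfl hne
  · exact ⟨false, true, by decide, hl, hr⟩
  · exact ⟨true, false, by decide, hr, hl⟩
  · exact absurd rfl hne

theorem prefix_box_of_forall_prefix_varBoxes {g : G} {S : Set V}
    (hg : D.gtype g = GateType.var ∨ D.gtype g = GateType.times)
    (hS : Captures D.toSetCircuit g S) {q : BPos} (hq : ∀ b ∈ D.varBoxes S, q <+: b) :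
    q <+: D.σ g := by
  rcases hg with hv | ht
  · refine hq _ ⟨g, hv, ?_, rfl⟩
    rw [hS.eq_varLabel hv, Set.inter_self]
    exact D.var_nonempty g hv
  · cases hS with
    | times _ hw₁ hw₂ hne h₁ h₂ =>
      obtain ⟨b₁, b₂, hb, hσ₁, hσ₂⟩ := D.exists_distinct_children_of_times_inputs ht hw₁ hw₂ hne
      obtain ⟨v₁, hv₁, hne₁⟩ := D.exists_var_inter_nonempty_of_wire hw₁ h₁
      obtain ⟨v₂, hv₂, hne₂⟩ := D.exists_var_inter_nonempty_of_wire hw₂ h₂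
      have hx₁ := D.box_prefix_of_captures h₁ hv₁ hne₁
      have hx₂ := D.box_prefix_of_captures h₂ hv₂ hne₂
      rw [hσ₁] at hx₁
      rw [hσ₂] at hx₂
      refine List.prefix_of_prefix_append_of_ne hb hx₁ hx₂ (hq _ ⟨v₁, hv₁, ?_, rfl⟩)
        (hq _ ⟨v₂, hv₂, ?_, rfl⟩)
      · exact hne₁.mono (Set.inter_subset_inter_right _ Set.subset_union_left)
      · exact hne₂.mono (Set.inter_subset_inter_right _ Set.subset_union_right)
    | _ => simp_all

end StructuredDNNF

/-- for a var-gate or ×-gate `g` and any `S ∈ S(g)`, the box of `g` is the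
unique least common ancestor of the boxes of the var-gates whose variables occur
in `S`. -/
theorem stmt3 {V G : Type} (D : StructuredDNNF V G) (g : G)
    (hg : D.gtype g = GateType.var ∨ D.gtype g = GateType.times)
    (S : Set V) (hS : Captures D.toSetCircuit g S) :
    IsLCA {p | ∃ g', D.gtype g' = GateType.var ∧ (D.varLabel g' ∩ S).Nonempty ∧ p = D.σ g'}
      (D.σ g) ∧
    ∀ p : BPos,
      IsLCA {p | ∃ g', D.gtype g' = GateType.var ∧ (D.varLabel g' ∩ S).Nonempty ∧ p = D.σ g'} p →
      p = D.σ g := by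
  have hlca : IsLCA (D.varBoxes S) (D.σ g) :=
    ⟨D.box_prefix_of_mem_varBoxes hS, fun _ => D.prefix_box_of_forall_prefix_varBoxes hg hS⟩
  exact ⟨hlca, fun _ hp => hp.unique hlca⟩
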